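/- arXiv:2101.07008 — 2 statements merged into one kernel-verified Lean document; each statement's English description precedes it below -/
import Mathlib

section
/- Let Ω ⊆ ℝⁿ be open, p > 1, A(x) a symmetric positive definite matrix field on Ω, u : Ω → ℝ differentiable with u ≥ 0, and v : Ω → ℝ positive and differentiable. Define L(u,v) = |∇u|_A^p − p (u^{p−1}/v^{p−1}) |∇v|_A^{p−2} ⟨A∇u, ∇v⟩ + (p−1) (u^p/v^p) |∇v|_A^p, where |ξ|_A² = ⟨A(x)ξ,ξ⟩. Then L(u,v) ≥ 0 pointwise on Ω. -/
/-!
Cauchy–Schwarz for the inner product `⟨Aξ, η⟩` bounds the cross term `⟨A∇u, ∇v⟩` by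
`|∇u|_A |∇v|_A`; what remains is Young's inequality `p a d^(p-1) ≤ a^p + (p-1) d^p`
for `a = |∇u|_A` and `d = (u/v) |∇v|_A`.
-/

open Matrix

lemma Matrix.PosSemidef.dotProduct_mulVec_le_sqrt_mul_sqrt {ι : Type*} [Fintype ι]
    {B : Matrix ι ι ℝ} (hB : B.PosSemidef) (ξ η : ι → ℝ) :
    B *ᵥ ξ ⬝ᵥ η ≤ √(B *ᵥ ξ ⬝ᵥ ξ) * √(B *ᵥ η ⬝ᵥ η) := by
  let := B.toSeminormedAddCommGroup hB
  let := B.toInnerProductSpace hB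
  have h := real_inner_le_norm η ξ
  rw [norm_eq_sqrt_re_inner (𝕜 := ℝ), norm_eq_sqrt_re_inner (𝕜 := ℝ), mul_comm] at h
  exact h

lemma Real.mul_mul_rpow_sub_one_le {p a d : ℝ} (hp : 1 < p) (ha : 0 ≤ a) (hd : 0 ≤ d) :
    p * (a * d ^ (p - 1)) ≤ a ^ p + (p - 1) * d ^ p := by
  have hp0 : 0 < p := by linarith
  have hp1 : p - 1 ≠ 0 := by linarith
  have hpq : p.HolderConjugate (p / (p - 1)) := .conjExponent hp
  have hdq : (d ^ (p - 1)) ^ (p / (p - 1)) = d ^ p := by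
    rw [← Real.rpow_mul hd]
    congr 1
    field_simp
  have hy := Real.young_inequality_of_nonneg ha (Real.rpow_nonneg hd (p - 1)) hpq
  rw [hdq] at hy
  calc p * (a * d ^ (p - 1)) ≤ p * (a ^ p / p + d ^ p / (p / (p - 1))) := by gcongr
    _ = a ^ p + (p - 1) * d ^ p := by field_simp

lemma picone_scalar_nonneg {p a b c t : ℝ} (hp : 1 < p) (ha : 0 ≤ a) (hb : 0 ≤ b)
    (ht : 0 ≤ t) (hc : c ≤ a * b) :
    0 ≤ a ^ p - p * t ^ (p - 1) * b ^ (p - 2) * c + (p - 1) * t ^ p * b ^ p := by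
  have hcross : b ^ (p - 2) * c ≤ a * b ^ (p - 1) :=
    calc b ^ (p - 2) * c ≤ b ^ (p - 2) * (a * b) := by gcongr
      _ = a * b ^ (p - 1) := by
        rw [show p - 1 = p - 2 + 1 by ring, Real.rpow_add' hb (by linarith), Real.rpow_one]
        ring
  have hyoung := Real.mul_mul_rpow_sub_one_le hp ha (mul_nonneg ht hb)
  rw [Real.mul_rpow ht hb, Real.mul_rpow ht hb] at hyoung
  have hweight : 0 ≤ p * t ^ (p - 1) := mul_nonneg (by linarith) (Real.rpow_nonneg ht _)
  nlinarith [mul_le_mul_of_nonneg_left hcross hweight]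

theorem picone_L_nonneg_general {n : ℕ} (Ω : Set (EuclideanSpace ℝ (Fin n)))
    (p : ℝ) (hp : 1 < p)
    (A : EuclideanSpace ℝ (Fin n) → Matrix (Fin n) (Fin n) ℝ)
    (hA : ∀ x ∈ Ω, (A x).PosDef)
    (u v : EuclideanSpace ℝ (Fin n) → ℝ)
    (hu0 : ∀ x ∈ Ω, 0 ≤ u x)
    (hv0 : ∀ x ∈ Ω, 0 < v x)
    (x : EuclideanSpace ℝ (Fin n)) (hx : x ∈ Ω) :
    let g : (EuclideanSpace ℝ (Fin n) → ℝ) → Fin n → ℝ :=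
      fun f i => fderiv ℝ f x (EuclideanSpace.single i 1)
    let nA : (Fin n → ℝ) → ℝ := fun ξ => Real.sqrt ((A x).mulVec ξ ⬝ᵥ ξ)
    0 ≤ nA (g u) ^ p
        - p * (u x ^ (p - 1) / v x ^ (p - 1)) * nA (g v) ^ (p - 2)
            * ((A x).mulVec (g u) ⬝ᵥ g v)
        + (p - 1) * (u x ^ p / v x ^ p) * nA (g v) ^ p := by
  intro g nA
  have hcs := (hA x hx).posSemidef.dotProduct_mulVec_le_sqrt_mul_sqrt (g u) (g v)
  rw [← Real.div_rpow (hu0 x hx) (hv0 x hx).le, ← Real.div_rpow (hu0 x hx) (hv0 x hx).le]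
  exact picone_scalar_nonneg hp (Real.sqrt_nonneg _) (Real.sqrt_nonneg _)
    (div_nonneg (hu0 x hx) (hv0 x hx).le) hcs

/-- First-order Picone inequality with matrix weight: `L(u,v) ≥ 0` pointwise. -/
theorem picone_L_nonneg {n : ℕ} (Ω : Set (EuclideanSpace ℝ (Fin n))) (hΩ : IsOpen Ω)
    (p : ℝ) (hp : 1 < p)
    (A : EuclideanSpace ℝ (Fin n) → Matrix (Fin n) (Fin n) ℝ)
    (hA : ∀ x ∈ Ω, (A x).PosDef)
    (u v : EuclideanSpace ℝ (Fin n) → ℝ)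
    (hu : ∀ x ∈ Ω, DifferentiableAt ℝ u x) (hu0 : ∀ x ∈ Ω, 0 ≤ u x)
    (hv : ∀ x ∈ Ω, DifferentiableAt ℝ v x) (hv0 : ∀ x ∈ Ω, 0 < v x)
    (x : EuclideanSpace ℝ (Fin n)) (hx : x ∈ Ω) :
    let g : (EuclideanSpace ℝ (Fin n) → ℝ) → Fin n → ℝ :=
      fun f i => fderiv ℝ f x (EuclideanSpace.single i 1)
    let nA : (Fin n → ℝ) → ℝ := fun ξ => Real.sqrt ((A x).mulVec ξ ⬝ᵥ ξ)
    0 ≤ nA (g u) ^ p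
        - p * (u x ^ (p - 1) / v x ^ (p - 1)) * nA (g v) ^ (p - 2)
            * ((A x).mulVec (g u) ⬝ᵥ g v)
        + (p - 1) * (u x ^ p / v x ^ p) * nA (g v) ^ p :=
  picone_L_nonneg_general Ω p hp A hA u v hu0 hv0 x hx
end

section
/- Let Ω ⊆ ℝⁿ be a bounded domain, W ∈ C²(Ω) and H ∈ L¹_loc(Ω) positive, and suppose there exists v ∈ C⁴(Ω) with v > 0, −Δv > 0 a.e., and Δ(W(x)Δv) ≥ H(x) v on Ω. Then for all real-valued u ∈ C²_c(Ω) with u ≥ 0, ∫_Ω W(x)|Δu|² dx ≥ ∫_Ω H(x) u² dx. -/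
open MeasureTheory

/-- The Laplacian of `f` at `x` as the sum of second partial derivatives. -/
noncomputable def elap {n : ℕ} (f : EuclideanSpace ℝ (Fin n) → ℝ)
    (x : EuclideanSpace ℝ (Fin n)) : ℝ :=
  ∑ i, fderiv ℝ (fun y => fderiv ℝ f y (EuclideanSpace.single i 1)) x
    (EuclideanSpace.single i 1)

/-!
With `G = u² / v`, the Bessel-pair condition gives `H u² ≤ G · Δ(WΔv)` on `Ω`. Since `G` is `C²`
with compact support in `Ω`, Green's second identity moves the Laplacian:
`∫_Ω G · Δ(WΔv) = ∫_Ω WΔv · ΔG` (multiplying `WΔv` by a cutoff equal to `1` near `supp G` makes it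
a globally defined `C²_c` function, and then the identity is integration by parts twice). Finally
the second-order Picone inequality `Δv · Δ(u²/v) ≤ (Δu)²`, valid where `v > 0` and `Δv ≤ 0`,
and `W ≥ 0` give `WΔv · ΔG ≤ W (Δu)²`. For Picone, write `u = q v`; then
`Δ(u²/v) = 2qΔu − q²Δv + 2v|∇q|²`, so `(Δu)² − Δv · Δ(u²/v) = (Δu − qΔv)² − 2vΔv|∇q|² ≥ 0`.
-/

open Set Filter Topology

section DirDeriv

variable {E : Type*} [NormedAddCommGroup E] [NormedSpace ℝ E]

noncomputable def dirDeriv (e : E) (f : E → ℝ) (x : E) : ℝ :=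
  fderiv ℝ f x e

variable {e : E} {f g : E → ℝ} {x : E} {s : Set E} {m k : WithTop ℕ∞}

theorem Filter.EventuallyEq.dirDeriv_eq (h : f =ᶠ[𝓝 x] g) :
    dirDeriv e f x = dirDeriv e g x := by
  rw [dirDeriv, dirDeriv, h.fderiv_eq]

theorem Filter.EventuallyEq.dirDeriv (h : f =ᶠ[𝓝 x] g) :
    dirDeriv e f =ᶠ[𝓝 x] dirDeriv e g :=
  h.eventuallyEq_nhds.mono fun _ hy => hy.dirDeriv_eq

theorem ContDiffAt.dirDeriv (hf : ContDiffAt ℝ k f x) (hmk : m + 1 ≤ k) :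
    ContDiffAt ℝ m (dirDeriv e f) x :=
  (hf.fderiv_right hmk).clm_apply contDiffAt_const

theorem ContDiff.dirDeriv (hf : ContDiff ℝ k f) (hmk : m + 1 ≤ k) :
    ContDiff ℝ m (dirDeriv e f) :=
  (hf.fderiv_right hmk).clm_apply contDiff_const

theorem ContDiffOn.dirDeriv (hf : ContDiffOn ℝ k f s) (hs : IsOpen s) (hmk : m + 1 ≤ k) :
    ContDiffOn ℝ m (dirDeriv e f) s :=
  (hf.fderiv_of_isOpen hs hmk).clm_apply contDiffOn_const

theorem HasCompactSupport.dirDeriv (hf : HasCompactSupport f) :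
    HasCompactSupport (dirDeriv e f) :=
  (hf.fderiv ℝ).comp_left (g := fun L : E →L[ℝ] ℝ => L e) rfl

theorem dirDeriv_add (hf : DifferentiableAt ℝ f x) (hg : DifferentiableAt ℝ g x) :
    dirDeriv e (f + g) x = dirDeriv e f x + dirDeriv e g x := by
  simp [dirDeriv, fderiv_add hf hg]

theorem dirDeriv_mul (hf : DifferentiableAt ℝ f x) (hg : DifferentiableAt ℝ g x) :
    dirDeriv e (f * g) x = f x * dirDeriv e g x + g x * dirDeriv e f x := by
  simp [dirDeriv, fderiv_mul hf hg]

theorem dirDeriv_dirDeriv_mul (hf : ContDiffAt ℝ 2 f x) (hg : ContDiffAt ℝ 2 g x) :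
    dirDeriv e (dirDeriv e (f * g)) x = f x * dirDeriv e (dirDeriv e g) x
      + 2 * (dirDeriv e f x * dirDeriv e g x) + g x * dirDeriv e (dirDeriv e f) x := by
  have hD : dirDeriv e (f * g) =ᶠ[𝓝 x] f * dirDeriv e g + g * dirDeriv e f := by
    filter_upwards [hf.eventually (by simp), hg.eventually (by simp)] with y hfy hgy
    exact dirDeriv_mul (hfy.differentiableAt (by simp)) (hgy.differentiableAt (by simp))
  have hf1 := hf.differentiableAt (by simp)
  have hg1 := hg.differentiableAt (by simp)
  have hDf := (hf.dirDeriv (e := e) (m := 1) le_rfl).differentiableAt one_ne_zero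
  have hDg := (hg.dirDeriv (e := e) (m := 1) le_rfl).differentiableAt one_ne_zero
  rw [hD.dirDeriv_eq, dirDeriv_add (hf1.mul hDg) (hg1.mul hDf), dirDeriv_mul hf1 hDg,
    dirDeriv_mul hg1 hDf]
  ring

variable [FiniteDimensional ℝ E] [MeasurableSpace E] [BorelSpace E] {μ : Measure E}
  [μ.IsAddHaarMeasure]

theorem integral_mul_dirDeriv_dirDeriv (hf : ContDiff ℝ 2 f) (hg : ContDiff ℝ 2 g)
    (hfc : HasCompactSupport f) :
    ∫ x, f x * dirDeriv e (dirDeriv e g) x ∂μ = -∫ x, dirDeriv e f x * dirDeriv e g x ∂μ := by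
  have hDf : ContDiff ℝ 1 (dirDeriv e f) := hf.dirDeriv le_rfl
  have hDg : ContDiff ℝ 1 (dirDeriv e g) := hg.dirDeriv le_rfl
  have hDDg : Continuous (dirDeriv e (dirDeriv e g)) :=
    (hDg.dirDeriv (m := 0) (by norm_num)).continuous
  exact integral_mul_fderiv_eq_neg_fderiv_mul_of_integrable
    ((hDf.continuous.mul hDg.continuous).integrable_of_hasCompactSupport hfc.dirDeriv.mul_right)
    ((hf.continuous.mul hDDg).integrable_of_hasCompactSupport hfc.mul_right)
    ((hf.continuous.mul hDg.continuous).integrable_of_hasCompactSupport hfc.mul_right)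
    (fun x _ => hf.differentiable (by simp) x) (fun x _ => hDg.differentiable one_ne_zero x)

end DirDeriv

section CompactSupport

open scoped Manifold

theorem ContDiffOn.contDiff_of_tsupport_subset {E F : Type*} [NormedAddCommGroup E]
    [NormedSpace ℝ E] [NormedAddCommGroup F] [NormedSpace ℝ F] {f : E → F} {s : Set E}
    {k : WithTop ℕ∞} (hf : ContDiffOn ℝ k f s) (hs : IsOpen s) (hfs : tsupport f ⊆ s) :
    ContDiff ℝ k f :=
  contDiff_of_contDiffOn_union_of_isOpen hf
    (contDiffOn_const (c := 0).congr fun _ hx => image_eq_zero_of_notMem_tsupport hx)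
    (compl_subset_iff_union.mp (compl_subset_compl.mpr hfs)) hs (isClosed_tsupport f).isOpen_compl

theorem ContinuousOn.integrableOn_mul_of_tsupport_subset {E : Type*} [TopologicalSpace E]
    [MeasurableSpace E] [OpensMeasurableSpace E] {μ : Measure E} [IsFiniteMeasureOnCompacts μ]
    {f g : E → ℝ} {s : Set E} (hf : ContinuousOn f s) (hs : IsOpen s) (hg : Continuous g)
    (hgc : HasCompactSupport g) (hgs : tsupport g ⊆ s) :
    IntegrableOn (fun x => f x * g x) s μ :=
  ((hf.mul hg.continuousOn).continuous_of_tsupport_subset hs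
    (tsupport_mul_subset_right.trans hgs)).integrable_of_hasCompactSupport
    hgc.mul_left |>.integrableOn

theorem exists_contDiff_hasCompactSupport_eventuallyEq_one {E : Type*} [NormedAddCommGroup E]
    [NormedSpace ℝ E] [FiniteDimensional ℝ E] {k : ℕ∞} {K U : Set E} (hK : IsCompact K)
    (hU : IsOpen U) (hKU : K ⊆ U) :
    ∃ φ : E → ℝ, ContDiff ℝ k φ ∧ HasCompactSupport φ ∧ tsupport φ ⊆ U ∧
      ∀ᶠ x in 𝓝ˢ K, φ x = 1 := by
  obtain ⟨L, hL, hKL, hLU⟩ := exists_compact_between hK hU hKU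
  obtain ⟨φ, hφ1, hφ0, -⟩ :=
    exists_contMDiffMap_one_nhds_of_subset_interior 𝓘(ℝ, E) (n := k) hK.isClosed hKL
  have hφL : tsupport φ ⊆ L :=
    closure_minimal (fun x hx => by_contra fun hxL => hx (hφ0 x hxL)) hL.isClosed
  exact ⟨φ, contMDiff_iff_contDiff.mp φ.contMDiff, hL.of_isClosed_subset (isClosed_tsupport _) hφL,
    hφL.trans hLU, hφ1⟩

theorem tsupport_sq_div_subset {X : Type*} [TopologicalSpace X] {u v : X → ℝ} :
    tsupport (fun y => u y ^ 2 / v y) ⊆ tsupport u :=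
  closure_mono fun y hy hu0 => hy (by simp [hu0])

theorem HasCompactSupport.sq_div {X : Type*} [TopologicalSpace X] {u v : X → ℝ}
    (hu : HasCompactSupport u) : HasCompactSupport fun y => u y ^ 2 / v y :=
  hu.of_isClosed_subset (isClosed_tsupport _) tsupport_sq_div_subset

theorem ContDiff.sq_div_of_tsupport_subset {E : Type*} [NormedAddCommGroup E] [NormedSpace ℝ E]
    {u v : E → ℝ} {s : Set E} {k : WithTop ℕ∞} (hu : ContDiff ℝ k u)
    (hv : ContDiffOn ℝ k v s) (hs : IsOpen s) (hv0 : ∀ x ∈ s, v x ≠ 0) (hus : tsupport u ⊆ s) :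
    ContDiff ℝ k fun y => u y ^ 2 / v y :=
  ((hu.contDiffOn.pow 2).div hv hv0).contDiff_of_tsupport_subset hs
    (tsupport_sq_div_subset.trans hus)

end CompactSupport

section Laplacian

variable {n : ℕ} {f g u v : EuclideanSpace ℝ (Fin n) → ℝ} {x : EuclideanSpace ℝ (Fin n)}
  {s : Set (EuclideanSpace ℝ (Fin n))} {m k : WithTop ℕ∞}
  {μ : Measure (EuclideanSpace ℝ (Fin n))} [μ.IsAddHaarMeasure]

local notation "∂" i => dirDeriv (EuclideanSpace.single i (1 : ℝ))

theorem elap_eq_sum_dirDeriv (f : EuclideanSpace ℝ (Fin n) → ℝ) (x : EuclideanSpace ℝ (Fin n)) :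
    elap f x = ∑ i, (∂ i) ((∂ i) f) x :=
  rfl

theorem Filter.EventuallyEq.elap_eq (h : f =ᶠ[𝓝 x] g) : elap f x = elap g x := by
  simp only [elap_eq_sum_dirDeriv, h.dirDeriv.dirDeriv_eq]

theorem elap_eq_zero_of_notMem_tsupport (hx : x ∉ tsupport f) : elap f x = 0 := by
  rw [(notMem_tsupport_iff_eventuallyEq.mp hx).elap_eq]
  simp [elap]

theorem tsupport_elap_subset : tsupport (elap f) ⊆ tsupport f :=
  closure_minimal (fun _ hx => by_contra fun h => hx (elap_eq_zero_of_notMem_tsupport h))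
    (isClosed_tsupport f)

theorem HasCompactSupport.elap (hf : HasCompactSupport f) : HasCompactSupport (elap f) :=
  hf.of_isClosed_subset (isClosed_tsupport _) tsupport_elap_subset

theorem ContDiffOn.elap (hf : ContDiffOn ℝ k f s) (hs : IsOpen s) (hmk : m + 2 ≤ k) :
    ContDiffOn ℝ m (elap f) s :=
  ContDiffOn.sum fun i _ =>
    (hf.dirDeriv hs (m := m + 1) (by rwa [add_assoc, one_add_one_eq_two])).dirDeriv hs le_rfl

theorem ContDiff.elap (hf : ContDiff ℝ k f) (hmk : m + 2 ≤ k) : ContDiff ℝ m (elap f) :=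
  contDiffOn_univ.mp (hf.contDiffOn.elap isOpen_univ hmk)

theorem elap_mul (hf : ContDiffAt ℝ 2 f x) (hg : ContDiffAt ℝ 2 g x) :
    elap (f * g) x = f x * elap g x + 2 * ∑ i, (∂ i) f x * (∂ i) g x + g x * elap f x := by
  simp only [elap_eq_sum_dirDeriv, dirDeriv_dirDeriv_mul hf hg, Finset.sum_add_distrib,
    Finset.mul_sum]

theorem elap_sq_div (hu : ContDiffAt ℝ 2 u x) (hv : ContDiffAt ℝ 2 v x) (hvx : v x ≠ 0) :
    elap (fun y => u y ^ 2 / v y) x = 2 * (u x / v x) * elap u x - (u x / v x) ^ 2 * elap v x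
      + 2 * v x * ∑ i, (∂ i) (fun y => u y / v y) x ^ 2 := by
  set q : EuclideanSpace ℝ (Fin n) → ℝ := fun y => u y / v y
  have hq : ContDiffAt ℝ 2 q x := hu.div hv hvx
  have hv_ne : ∀ᶠ y in 𝓝 x, v y ≠ 0 := hv.continuousAt.eventually_ne hvx
  have hu_eq : u =ᶠ[𝓝 x] q * v := hv_ne.mono fun y hy => by simp [q, hy]
  have hG_eq : (fun y => u y ^ 2 / v y) =ᶠ[𝓝 x] (q * q) * v :=
    hv_ne.mono fun y hy => by simp [q]; field_simp
  rw [hG_eq.elap_eq, hu_eq.elap_eq, elap_mul (f := q * q) (hq.mul hq) hv, elap_mul hq hv,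
    elap_mul hq hq]
  have hq1 := hq.differentiableAt (by simp)
  have h_sq : ∑ i, (∂ i) (q * q) x * (∂ i) v x = 2 * q x * ∑ i, (∂ i) q x * (∂ i) v x := by
    simp only [dirDeriv_mul hq1 hq1, Finset.mul_sum]
    exact Finset.sum_congr rfl fun i _ => by ring
  rw [h_sq, show u x / v x = q x from rfl]
  simp only [Pi.mul_apply, ← sq]
  ring

theorem elap_mul_elap_sq_div_le (hu : ContDiffAt ℝ 2 u x) (hv : ContDiffAt ℝ 2 v x)
    (hvx : 0 < v x) (hΔv : elap v x ≤ 0) :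
    elap v x * elap (fun y => u y ^ 2 / v y) x ≤ elap u x ^ 2 := by
  rw [elap_sq_div hu hv hvx.ne']
  have hS : 0 ≤ ∑ i, (∂ i) (fun y => u y / v y) x ^ 2 :=
    Finset.sum_nonneg fun i _ => sq_nonneg _
  nlinarith [sq_nonneg (elap u x - u x / v x * elap v x),
    mul_nonneg (mul_nonneg (neg_nonneg.mpr hΔv) hvx.le) hS]

theorem integral_mul_elap (hf : ContDiff ℝ 2 f) (hg : ContDiff ℝ 2 g)
    (hfc : HasCompactSupport f) :
    ∫ x, f x * elap g x ∂μ = -∑ i, ∫ x, (∂ i) f x * (∂ i) g x ∂μ := by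
  simp only [elap_eq_sum_dirDeriv, Finset.mul_sum]
  rw [integral_finsetSum _ fun i _ => ?_]
  · simp only [integral_mul_dirDeriv_dirDeriv hf hg hfc, Finset.sum_neg_distrib]
  have hDDg : Continuous ((∂ i) ((∂ i) g)) :=
    ((hg.dirDeriv (m := 1) (by norm_num)).dirDeriv (m := 0) (by norm_num)).continuous
  exact (hf.continuous.mul hDDg).integrable_of_hasCompactSupport hfc.mul_right

theorem integral_elap_mul_eq_integral_mul_elap (hf : ContDiff ℝ 2 f) (hg : ContDiff ℝ 2 g)
    (hfc : HasCompactSupport f) (hgc : HasCompactSupport g) :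
    ∫ x, elap f x * g x ∂μ = ∫ x, f x * elap g x ∂μ := by
  simp only [mul_comm (elap f _), integral_mul_elap hg hf hgc, integral_mul_elap hf hg hfc,
    mul_comm ((∂ _) g _)]

theorem setIntegral_elap_mul_eq_setIntegral_mul_elap {Ω : Set (EuclideanSpace ℝ (Fin n))}
    {F G : EuclideanSpace ℝ (Fin n) → ℝ} (hΩ : IsOpen Ω) (hF : ContDiffOn ℝ 2 F Ω)
    (hG : ContDiff ℝ 2 G) (hGc : HasCompactSupport G) (hGΩ : tsupport G ⊆ Ω) :
    ∫ x in Ω, elap F x * G x ∂μ = ∫ x in Ω, F x * elap G x ∂μ := by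
  obtain ⟨φ, hφ, hφc, hφΩ, hφ1⟩ :=
    exists_contDiff_hasCompactSupport_eventuallyEq_one (k := 2) hGc hΩ hGΩ
  set F' := φ * F
  have hF' : ContDiff ℝ 2 F' :=
    (hφ.contDiffOn.mul hF).contDiff_of_tsupport_subset hΩ (tsupport_mul_subset_left.trans hφΩ)
  have h_elap : ∀ x, elap F x * G x = elap F' x * G x := by
    intro x
    by_cases hx : x ∈ tsupport G
    · have hFF' : F =ᶠ[𝓝 x] F' :=
        (hφ1.filter_mono (nhds_le_nhdsSet hx)).mono fun y hy => by simp [F', hy]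
      rw [hFF'.elap_eq]
    · rw [image_eq_zero_of_notMem_tsupport hx, mul_zero, mul_zero]
  have h_mul : ∀ x, F x * elap G x = F' x * elap G x := by
    intro x
    by_cases hx : x ∈ tsupport G
    · simp [F', hφ1.self_of_nhdsSet x hx]
    · simp [elap_eq_zero_of_notMem_tsupport hx]
  have hG_off : ∀ x ∉ Ω, x ∉ tsupport G := fun x hx h => hx (hGΩ h)
  calc ∫ x in Ω, elap F x * G x ∂μ = ∫ x, elap F' x * G x ∂μ := by
        simp only [h_elap]
        exact setIntegral_eq_integral_of_forall_compl_eq_zero fun x hx => by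
          simp [image_eq_zero_of_notMem_tsupport (hG_off x hx)]
    _ = ∫ x, F' x * elap G x ∂μ := integral_elap_mul_eq_integral_mul_elap hF' hG hφc.mul_right hGc
    _ = ∫ x in Ω, F x * elap G x ∂μ := by
        simp only [h_mul]
        exact (setIntegral_eq_integral_of_forall_compl_eq_zero fun x hx => by
          simp [elap_eq_zero_of_notMem_tsupport (hG_off x hx)]).symm

theorem setIntegral_elap_mul_sq_div_le {Ω : Set (EuclideanSpace ℝ (Fin n))}
    {W : EuclideanSpace ℝ (Fin n) → ℝ} (hΩ : IsOpen Ω) (hW : ContDiffOn ℝ 2 W Ω)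
    (hW0 : ∀ x ∈ Ω, 0 ≤ W x) (hv : ContDiffOn ℝ 4 v Ω) (hvpos : ∀ x ∈ Ω, 0 < v x)
    (hΔv : ∀ᵐ x ∂μ.restrict Ω, elap v x ≤ 0) (hu : ContDiff ℝ 2 u) (hucs : HasCompactSupport u)
    (husupp : tsupport u ⊆ Ω) :
    ∫ x in Ω, elap (fun y => W y * elap v y) x * (u x ^ 2 / v x) ∂μ
      ≤ ∫ x in Ω, W x * elap u x ^ 2 ∂μ := by
  have hGΩ : tsupport (fun y => u y ^ 2 / v y) ⊆ Ω := tsupport_sq_div_subset.trans husupp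
  have hG : ContDiff ℝ 2 fun y => u y ^ 2 / v y :=
    hu.sq_div_of_tsupport_subset (hv.of_le (by norm_num)) hΩ (fun x hx => (hvpos x hx).ne') husupp
  have hWv : ContDiffOn ℝ 2 (fun y => W y * elap v y) Ω := hW.mul (hv.elap hΩ (by norm_num))
  have hΔu := (hu.elap (m := 0) (by norm_num)).continuous
  rw [setIntegral_elap_mul_eq_setIntegral_mul_elap hΩ hWv hG hucs.sq_div hGΩ]
  refine integral_mono_ae ?_ ?_ ?_
  · exact hWv.continuousOn.integrableOn_mul_of_tsupport_subset hΩ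
      (hG.elap (m := 0) (by norm_num)).continuous hucs.sq_div.elap
      (tsupport_elap_subset.trans hGΩ)
  · simp only [sq, ← mul_assoc]
    exact (hW.continuousOn.mul hΔu.continuousOn).integrableOn_mul_of_tsupport_subset hΩ hΔu
      hucs.elap (tsupport_elap_subset.trans husupp)
  · filter_upwards [hΔv, ae_restrict_mem hΩ.measurableSet] with x hΔvx hx
    have hvx : ContDiffAt ℝ 2 v x := (hv.of_le (by norm_num)).contDiffAt (hΩ.mem_nhds hx)
    rw [mul_assoc]
    exact mul_le_mul_of_nonneg_left
      (elap_mul_elap_sq_div_le hu.contDiffAt hvx (hvpos x hx) hΔvx) (hW0 x hx)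

end Laplacian

theorem rellich_bessel_pair_general {n : ℕ} (Ω : Set (EuclideanSpace ℝ (Fin n)))
    (hΩo : IsOpen Ω)
    (W H v : EuclideanSpace ℝ (Fin n) → ℝ)
    (hW : ContDiffOn ℝ 2 W Ω) (hWpos : ∀ x ∈ Ω, 0 < W x)
    (hHpos : ∀ x ∈ Ω, 0 < H x)
    (hv : ContDiffOn ℝ 4 v Ω) (hvpos : ∀ x ∈ Ω, 0 < v x)
    (hvlap : ∀ᵐ x ∂(volume.restrict Ω), 0 < -elap v x)
    (hsup : ∀ x ∈ Ω, H x * v x ≤ elap (fun y => W y * elap v y) x)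
    (u : EuclideanSpace ℝ (Fin n) → ℝ)
    (hu : ContDiff ℝ 2 u) (hucs : HasCompactSupport u) (husupp : tsupport u ⊆ Ω) :
    ∫ x in Ω, H x * u x ^ 2 ≤ ∫ x in Ω, W x * (elap u x) ^ 2 := by
  have hWv : ContDiffOn ℝ 2 (fun y => W y * elap v y) Ω := hW.mul (hv.elap hΩo (by norm_num))
  have hG : ContDiff ℝ 2 fun y => u y ^ 2 / v y :=
    hu.sq_div_of_tsupport_subset (hv.of_le (by norm_num)) hΩo (fun x hx => (hvpos x hx).ne') husupp
  calc ∫ x in Ω, H x * u x ^ 2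
      ≤ ∫ x in Ω, elap (fun y => W y * elap v y) x * (u x ^ 2 / v x) := by
        refine integral_mono_of_nonneg ?_ ?_ ?_
        · filter_upwards [ae_restrict_mem hΩo.measurableSet] with x hx
          exact mul_nonneg (hHpos x hx).le (sq_nonneg _)
        · exact (hWv.elap hΩo (m := 0) (by norm_num)).continuousOn
            |>.integrableOn_mul_of_tsupport_subset hΩo hG.continuous hucs.sq_div
              (tsupport_sq_div_subset.trans husupp)
        · filter_upwards [ae_restrict_mem hΩo.measurableSet] with x hx
          calc H x * u x ^ 2 = H x * v x * (u x ^ 2 / v x) := by field_simp [(hvpos x hx).ne']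
          _ ≤ _ := mul_le_mul_of_nonneg_right (hsup x hx) (div_nonneg (sq_nonneg _) (hvpos x hx).le)
    _ ≤ ∫ x in Ω, W x * elap u x ^ 2 :=
        setIntegral_elap_mul_sq_div_le hΩo hW (fun x hx => (hWpos x hx).le) hv hvpos
          (hvlap.mono fun x hx => by linarith) hu hucs husupp

/-- Rellich inequality with a Bessel pair (case `p = 2`): if `v > 0`, `−Δv > 0` a.e.,
and `Δ(WΔv) ≥ Hv` on `Ω`, then `∫_Ω W|Δu|² ≥ ∫_Ω H u²` for nonnegative `u ∈ C²_c(Ω)`. -/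
theorem rellich_bessel_pair {n : ℕ} (Ω : Set (EuclideanSpace ℝ (Fin n)))
    (hΩo : IsOpen Ω) (hΩc : IsConnected Ω) (hΩb : Bornology.IsBounded Ω)
    (W H v : EuclideanSpace ℝ (Fin n) → ℝ)
    (hW : ContDiffOn ℝ 2 W Ω) (hWpos : ∀ x ∈ Ω, 0 < W x)
    (hH : LocallyIntegrableOn H Ω) (hHpos : ∀ x ∈ Ω, 0 < H x)
    (hv : ContDiffOn ℝ 4 v Ω) (hvpos : ∀ x ∈ Ω, 0 < v x)
    (hvlap : ∀ᵐ x ∂(volume.restrict Ω), 0 < -elap v x)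
    (hsup : ∀ x ∈ Ω, H x * v x ≤ elap (fun y => W y * elap v y) x)
    (u : EuclideanSpace ℝ (Fin n) → ℝ)
    (hu : ContDiff ℝ 2 u) (hucs : HasCompactSupport u) (husupp : tsupport u ⊆ Ω)
    (hu0 : ∀ x, 0 ≤ u x) :
    ∫ x in Ω, H x * u x ^ 2 ≤ ∫ x in Ω, W x * (elap u x) ^ 2 :=
  rellich_bessel_pair_general Ω hΩo W H v hW hWpos hHpos hv hvpos hvlap hsup u hu hucs husupp
end
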